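/- Let R = Z_2 × Z_2 × Z_3. Then G_Id(R) contains no induced path on four vertices (G_Id(R) is a cograph), but G_Id(R) is not a split graph since it contains an induced 2K_2. -/

import Mathlib

/-- The idempotent graph of a ring: vertices are ring elements, distinct `x, y`
adjacent iff `x + y` is idempotent. -/
def idemGraph (R : Type*) [Ring R] : SimpleGraph R where
  Adj x y := x ≠ y ∧ IsIdempotentElem (x + y)
  symm := ⟨fun x y ⟨h, hi⟩ => ⟨h.symm, by rwa [add_comm]⟩⟩
  loopless := ⟨fun x ⟨h, _⟩ => h rfl⟩

/-- The set of idempotent elements of a ring. -/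
def idemSet (R : Type*) [Ring R] : Set R := {e : R | IsIdempotentElem e}

/-- A split graph: vertices partition into a clique and an independent set. -/
def IsSplitGraph {V : Type*} (G : SimpleGraph V) : Prop :=
  ∃ C I : Set V, Disjoint C I ∧ C ∪ I = Set.univ ∧ G.IsClique C ∧
    I.Pairwise (fun a b => ¬ G.Adj a b)

/-- A cograph: no induced path on four vertices. -/
def IsCograph {V : Type*} (G : SimpleGraph V) : Prop :=
  ¬ ∃ a b c d : V, a ≠ c ∧ a ≠ d ∧ b ≠ d ∧
    G.Adj a b ∧ G.Adj b c ∧ G.Adj c d ∧ ¬ G.Adj a c ∧ ¬ G.Adj a d ∧ ¬ G.Adj b d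

/-!
Adjacency in `idemGraph (ZMod 2 × ZMod 2 × ZMod 3)` only sees the `ZMod 3` coordinates, since
every element of `ZMod 2` is idempotent. So the graph is the blow-up of the looped path
`0 — 1 — 2` (loops at `0` and `2`, the idempotents of `ZMod 3` being `0` and `1`) in which each
vertex becomes a class of four elements: a clique over a looped vertex, an independent set
otherwise. An induced `P₄` would map to a `P₄`-pattern in this three-vertex graph, and there is
none; two edges inside the classes over `0` and `2` form an induced `2K₂`.
-/

lemma Prod.isIdempotentElem_iff {M N : Type*} [Mul M] [Mul N] {x : M × N} :
    IsIdempotentElem x ↔ IsIdempotentElem x.1 ∧ IsIdempotentElem x.2 :=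
  Prod.ext_iff

lemma idemGraph_prod_adj_iff {R S : Type*} [Ring R] [Ring S] (hR : ∀ r : R, IsIdempotentElem r)
    (x y : R × S) :
    (idemGraph (R × S)).Adj x y ↔ x ≠ y ∧ IsIdempotentElem (x.2 + y.2) := by
  simp only [idemGraph, Prod.isIdempotentElem_iff, Prod.fst_add, Prod.snd_add, hR, true_and]

lemma ZMod.isIdempotentElem_two (r : ZMod 2) : IsIdempotentElem r := by
  fin_cases r <;> rfl

lemma idemGraph_adj_iff (x y : ZMod 2 × ZMod 2 × ZMod 3) :
    (idemGraph (ZMod 2 × ZMod 2 × ZMod 3)).Adj x y ↔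
      x ≠ y ∧ IsIdempotentElem (x.2.2 + y.2.2) := by
  simp only [idemGraph_prod_adj_iff ZMod.isIdempotentElem_two, Prod.isIdempotentElem_iff,
    Prod.snd_add, Prod.fst_add, ZMod.isIdempotentElem_two, true_and]

lemma isCograph_of_adj_iff {V W : Type*} {G : SimpleGraph V} {f : V → W} {H : W → W → Prop}
    (hG : ∀ x y, G.Adj x y ↔ x ≠ y ∧ H (f x) (f y))
    (hH : ¬ ∃ p q r s, H p q ∧ H q r ∧ H r s ∧ ¬ H p r ∧ ¬ H p s ∧ ¬ H q s) :
    IsCograph G := by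
  rintro ⟨a, b, c, d, hac, had, hbd, hab, hbc, hcd, nac, nad, nbd⟩
  simp only [hG, not_and] at hab hbc hcd nac nad nbd
  exact hH ⟨f a, f b, f c, f d, hab.2, hbc.2, hcd.2, nac hac, nad had, nbd hbd⟩

lemma not_isSplitGraph_of_induced_two_edges {V : Type*} {G : SimpleGraph V}
    (h : ∃ a b c d : V, G.Adj a b ∧ G.Adj c d ∧ a ≠ c ∧ a ≠ d ∧ b ≠ c ∧ b ≠ d ∧
      ¬ G.Adj a c ∧ ¬ G.Adj a d ∧ ¬ G.Adj b c ∧ ¬ G.Adj b d) :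
    ¬ IsSplitGraph G := by
  obtain ⟨a, b, c, d, hab, hcd, hac, had, hbc, hbd, nac, nad, nbc, nbd⟩ := h
  rintro ⟨C, I, -, hcover, hC, hI⟩
  have mem (v : V) : v ∈ C ∨ v ∈ I := (Set.ext_iff.mp hcover v).mpr trivial
  have edge_meets_clique {x y : V} (hxy : G.Adj x y) : x ∈ C ∨ y ∈ C := by
    rcases mem x with hx | hx
    · exact .inl hx
    rcases mem y with hy | hy
    · exact .inr hy
    · exact absurd hxy (hI hx hy hxy.ne)
  rcases edge_meets_clique hab with ha | hb <;> rcases edge_meets_clique hcd with hc | hd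
  · exact nac (hC ha hc hac)
  · exact nad (hC ha hd had)
  · exact nbc (hC hb hc hbc)
  · exact nbd (hC hb hd hbd)

theorem stmt18 :
    IsCograph (idemGraph (ZMod 2 × ZMod 2 × ZMod 3)) ∧
    (∃ a b c d : ZMod 2 × ZMod 2 × ZMod 3,
      (idemGraph (ZMod 2 × ZMod 2 × ZMod 3)).Adj a b ∧
      (idemGraph (ZMod 2 × ZMod 2 × ZMod 3)).Adj c d ∧
      a ≠ c ∧ a ≠ d ∧ b ≠ c ∧ b ≠ d ∧
      ¬ (idemGraph (ZMod 2 × ZMod 2 × ZMod 3)).Adj a c ∧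
      ¬ (idemGraph (ZMod 2 × ZMod 2 × ZMod 3)).Adj a d ∧
      ¬ (idemGraph (ZMod 2 × ZMod 2 × ZMod 3)).Adj b c ∧
      ¬ (idemGraph (ZMod 2 × ZMod 2 × ZMod 3)).Adj b d) ∧
    ¬ IsSplitGraph (idemGraph (ZMod 2 × ZMod 2 × ZMod 3)) := by
  refine ⟨isCograph_of_adj_iff (f := fun x ↦ x.2.2) (H := fun p q ↦ IsIdempotentElem (p + q))
      idemGraph_adj_iff (by simp only [IsIdempotentElem.iff_eq_zero_or_one]; decide), ?_⟩
  refine (fun h ↦ ⟨h, not_isSplitGraph_of_induced_two_edges h⟩)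
    ⟨(0, 0, 0), (1, 0, 0), (0, 0, 2), (1, 0, 2), ?_⟩
  simp only [idemGraph_adj_iff, IsIdempotentElem.iff_eq_zero_or_one]
  decide
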